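/- Let X be a proper geodesic δ-hyperbolic space, C ⊆ ∂X with at least two points, and x a point of QC-Hull(C). Then for every z ∈ C and every geodesic ray ξ_{x,z} from x to z, there exists a geodesic line γ with both endpoints in C such that d(ξ_{x,z}(t), γ(t)) ≤ 14δ for every t ≥ 0; in particular d(ξ_{x,z}(t), QC-Hull(C)) ≤ 14δ for all t ≥ 0. -/
import Mathlib


open Filter Metric Set
open scoped ENNReal

/-- The Gromov product `(y,z)_x`. -/
noncomputable def gp {X : Type*} [MetricSpace X] (x y z : X) : ℝ :=
  (dist x y + dist x z - dist y z) / 2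

/-- `X` is a geodesic metric space. -/
def IsGeodesicSpace (X : Type*) [MetricSpace X] : Prop :=
  ∀ a b : X, ∃ γ : ℝ → X, γ 0 = a ∧ γ (dist a b) = b ∧
    ∀ s ∈ Set.Icc (0 : ℝ) (dist a b), ∀ t ∈ Set.Icc (0 : ℝ) (dist a b),
      dist (γ s) (γ t) = |s - t|

/-- The 4-points condition of `δ`-hyperbolicity: `(x,z)_w ≥ min ((x,y)_w) ((y,z)_w) - δ`. -/
def Hyp4 (X : Type*) [MetricSpace X] (δ : ℝ) : Prop :=
  ∀ w x y z : X, gp w x z ≥ min (gp w x y) (gp w y z) - δ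

/-- A geodesic ray (parametrized on `[0,∞)`). -/
def IsGeodRay {X : Type*} [MetricSpace X] (ξ : ℝ → X) : Prop :=
  ∀ s t : ℝ, 0 ≤ s → 0 ≤ t → dist (ξ s) (ξ t) = |s - t|

/-- A geodesic line. -/
def IsGeodLine {X : Type*} [MetricSpace X] (γ : ℝ → X) : Prop :=
  ∀ s t : ℝ, dist (γ s) (γ t) = |s - t|

/-- A sequence converging to infinity in the Gromov sense. -/
def IsGromovSeq {X : Type*} [MetricSpace X] (x : X) (u : ℕ → X) : Prop :=
  Filter.Tendsto (fun p : ℕ × ℕ => gp x (u p.1) (u p.2)) Filter.atTop Filter.atTop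

/-- Equivalence of sequences converging to infinity. -/
def BEquiv {X : Type*} [MetricSpace X] (x : X)
    (u v : {u : ℕ → X // IsGromovSeq x u}) : Prop :=
  Filter.Tendsto (fun p : ℕ × ℕ => gp x (u.1 p.1) (v.1 p.2)) Filter.atTop Filter.atTop

/-- The Gromov boundary of `X` (with basepoint `x`). -/
def Boundary {X : Type*} [MetricSpace X] (x : X) := Quot (BEquiv x)

/-- The sequence `u` converges to the boundary point `z`. -/
def SeqLimit {X : Type*} [MetricSpace X] (x : X) (u : ℕ → X) (z : Boundary x) : Prop :=
  ∃ hu : IsGromovSeq x u, Quot.mk (BEquiv x) ⟨u, hu⟩ = z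

/-- `z` is the positive endpoint of the geodesic line `γ`. -/
def LineEndPlus {X : Type*} [MetricSpace X] (x : X) (γ : ℝ → X) (z : Boundary x) : Prop :=
  SeqLimit x (fun n : ℕ => γ n) z

/-- `z` is the negative endpoint of the geodesic line `γ`. -/
def LineEndMinus {X : Type*} [MetricSpace X] (x : X) (γ : ℝ → X) (z : Boundary x) : Prop :=
  SeqLimit x (fun n : ℕ => γ (-(n : ℝ))) z

/-- The quasiconvex hull of a subset `C` of the Gromov boundary: the union of all
geodesic lines with both endpoints in `C`. -/
def QCHull {X : Type*} [MetricSpace X] (x : X) (C : Set (Boundary x)) : Set X :=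
  {p | ∃ γ : ℝ → X, IsGeodLine γ ∧ (∃ z ∈ C, LineEndPlus x γ z) ∧
       (∃ z ∈ C, LineEndMinus x γ z) ∧ ∃ t : ℝ, γ t = p}

open scoped Topology

lemma gp_comm {X : Type*} [MetricSpace X] (x y z : X) : gp x y z = gp x z y := by
  unfold gp; rw [dist_comm y z]; ring

lemma gp_nonneg {X : Type*} [MetricSpace X] (x y z : X) : 0 ≤ gp x y z := by
  have h := dist_triangle y x z
  have h2 : dist y x = dist x y := dist_comm y x
  unfold gp; linarith

lemma dist_eq_gp {X : Type*} [MetricSpace X] (x y z : X) :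
    dist y z = dist x y + dist x z - 2 * gp x y z := by unfold gp; ring

lemma gp_lip {X : Type*} [MetricSpace X] (x y z z' : X) :
    gp x y z ≥ gp x y z' - dist z z' := by
  have h1 := dist_triangle x z z'
  have h2 := dist_triangle y z' z
  have h3 : dist z' z = dist z z' := dist_comm z' z
  unfold gp; linarith

lemma gp_lip_left {X : Type*} [MetricSpace X] (x y y' z : X) :
    gp x y z ≥ gp x y' z - dist y y' := by
  rw [gp_comm x y z, gp_comm x y' z]; exact gp_lip x z y y'

lemma tendsto_gp_fst {X : Type*} [MetricSpace X] {ι : Type*} {l : Filter ι}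
    {f : ι → X} {A : X} (h : Tendsto f l (𝓝 A)) (x y : X) :
    Tendsto (fun i => gp x (f i) y) l (𝓝 (gp x A y)) := by
  unfold gp
  exact (((tendsto_const_nhds.dist h).add tendsto_const_nhds).sub
    (h.dist tendsto_const_nhds)).div_const 2

lemma exists_centered_segment {X : Type*} [MetricSpace X] (δ : ℝ) (hδ : 0 ≤ δ)
    (hgeo : IsGeodesicSpace X) (hhyp : Hyp4 X δ) (x p q : X) (hpq : gp x p q ≤ δ) :
    ∃ (σ : ℝ → X) (a b : ℝ), a ≤ 0 ∧ 0 ≤ b ∧ σ a = q ∧ σ b = p ∧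
      (∀ s ∈ Set.Icc a b, ∀ t ∈ Set.Icc a b, dist (σ s) (σ t) = |s - t|) ∧
      (∀ t, σ t = σ (max a (min t b))) ∧ dist x (σ 0) ≤ 3 * δ := by
  obtain ⟨c, hc0, hcd, hiso⟩ := hgeo q p
  set d := dist q p with hd
  have hd0 : 0 ≤ d := dist_nonneg
  -- continuity of c on [0,d]
  have hlip : LipschitzOnWith 1 c (Set.Icc 0 d) := by
    apply LipschitzOnWith.of_dist_le_mul
    intro s hs t ht
    rw [hiso s hs t ht]
    simp [Real.dist_eq]
  have hcont : ContinuousOn c (Set.Icc 0 d) := hlip.continuousOn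
  have hF : Continuous fun w : X => gp w p x - gp w x q := by
    unfold gp; fun_prop
  have hgc : ContinuousOn (fun s => gp (c s) p x - gp (c s) x q) (Set.Icc 0 d) :=
    hF.comp_continuousOn hcont
  have hg0 : 0 ≤ gp (c 0) p x - gp (c 0) x q := by
    rw [hc0]
    have : gp q x q = 0 := by unfold gp; rw [dist_comm x q]; simp
    have := gp_nonneg q p x
    linarith
  have hgd : gp (c d) p x - gp (c d) x q ≤ 0 := by
    rw [hcd]
    have : gp p p x = 0 := by unfold gp; simp
    have := gp_nonneg p x q
    linarith
  have hIVT := intermediate_value_Icc' hd0 hgc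
  have h0mem : (0:ℝ) ∈ Set.Icc (gp (c d) p x - gp (c d) x q) (gp (c 0) p x - gp (c 0) x q) :=
    ⟨hgd, hg0⟩
  obtain ⟨m, hm, hgm⟩ := hIVT h0mem
  set y := c m with hy
  have hyq : dist y q = m := by
    rw [← hc0, hy, hiso m hm 0 ⟨le_refl 0, hd0⟩, sub_zero, abs_of_nonneg hm.1]
  have hyp : dist y p = d - m := by
    rw [← hcd, hy, hiso m hm d ⟨hd0, le_refl d⟩]
    rw [abs_of_nonpos (by linarith [hm.2] : m - d ≤ 0)]; ring
  have hgpq : gp y p q = 0 := by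
    unfold gp; rw [hyp, hyq, dist_comm p q, ← hd]; ring
  have hmin := hhyp y p x q
  rw [hgpq] at hmin
  have hgm' : gp y p x - gp y x q = 0 := hgm
  have heq : gp y p x = gp y x q := by linarith
  have hle : gp y p x ≤ δ := by
    rcases min_le_iff.mp (by linarith : min (gp y p x) (gp y x q) ≤ δ) with h | h
    · exact h
    · rw [heq]; exact h
  -- dist x y ≤ 3δ
  have hdxy : dist x y ≤ 3 * δ := by
    have e1 : gp y p x = (dist y p + dist y x - dist p x) / 2 := rfl
    have e2 : gp y x q = (dist y x + dist y q - dist x q) / 2 := rfl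
    have e3 : gp x p q = (dist x p + dist x q - dist p q) / 2 := rfl
    have c1 : dist y x = dist x y := dist_comm y x
    have c2 : dist p x = dist x p := dist_comm p x
    have c3 : dist p q = d := by rw [dist_comm p q]
    have hle2 : gp y x q ≤ δ := heq ▸ hle
    rw [e1, hyp, c1, c2] at hle
    rw [e2, hyq, c1] at hle2
    rw [e3, c3] at hpq
    linarith
  refine ⟨fun t => c (max 0 (min (t + m) d)), -m, d - m, by linarith [hm.1], by linarith [hm.2],
    ?_, ?_, ?_, ?_, ?_⟩
  · show c (max 0 (min (-m + m) d)) = q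
    rw [(by ring : -m + m = (0:ℝ)), min_eq_left hd0, max_self, hc0]
  · show c (max 0 (min (d - m + m) d)) = p
    rw [(by ring : d - m + m = d), min_self, max_eq_right hd0, hcd]
  · intro s hs t ht
    have hs' : s + m ∈ Set.Icc (0:ℝ) d := ⟨by linarith [hs.1], by linarith [hs.2]⟩
    have ht' : t + m ∈ Set.Icc (0:ℝ) d := ⟨by linarith [ht.1], by linarith [ht.2]⟩
    have es : max 0 (min (s + m) d) = s + m := by
      rw [min_eq_left hs'.2, max_eq_right hs'.1]
    have et : max 0 (min (t + m) d) = t + m := by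
      rw [min_eq_left ht'.2, max_eq_right ht'.1]
    show dist (c _) (c _) = _
    rw [es, et, hiso _ hs' _ ht']
    congr 1; ring
  · intro t
    show c _ = c _
    congr 1
    have h1 : max (-m) (min t (d - m)) + m = max 0 (min (t + m) d) := by
      rw [← max_add_add_right, ← min_add_add_right]; simp
    rw [h1]
    set u := max 0 (min (t + m) d) with hu
    have hu1 : 0 ≤ u := le_max_left _ _
    have hu2 : u ≤ d := by
      apply max_le hd0 (min_le_right _ _)
    rw [min_eq_left hu2, max_eq_right hu1]
  · show dist x (c (max 0 (min (0 + m) d))) ≤ 3 * δ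
    rw [(by ring : (0:ℝ) + m = m), min_eq_left hm.2, max_eq_right hm.1]
    exact hdxy

lemma half_min (u v : ℝ) : min u v = (u + v - |u - v|) / 2 := by
  rcases le_total u v with h | h
  · rw [min_eq_left h, abs_of_nonpos (by linarith : u - v ≤ 0)]; ring
  · rw [min_eq_right h, abs_of_nonneg (by linarith : 0 ≤ u - v)]; ring

/-- helper: tendsto atTop on product from a lower bound by min of coordinates -/
lemma tendsto_min_aux {f : ℕ × ℕ → ℝ} (c : ℝ)
    (h : ∀ n m : ℕ, f (n, m) ≥ min ((n : ℝ) - c) m - c) :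
    Filter.Tendsto f Filter.atTop Filter.atTop := by
  rw [Filter.tendsto_atTop]
  intro B
  obtain ⟨N, hN⟩ := exists_nat_ge (B + c + c + |c|)
  refine Filter.eventually_atTop.2 ⟨(N, N), fun p hp => ?_⟩
  have h1 : (N : ℝ) ≤ p.1 := Nat.cast_le.2 hp.1
  have h2 : (N : ℝ) ≤ p.2 := Nat.cast_le.2 hp.2
  have := h p.1 p.2
  have habs : c ≤ |c| := le_abs_self c
  have habs2 : 0 ≤ |c| := abs_nonneg c
  have habs3 : -|c| ≤ c := neg_abs_le c
  have hmin : min ((p.1 : ℝ) - c) (p.2 : ℝ) ≥ B + c := by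
    apply le_min <;> linarith
  calc B ≤ min ((p.1 : ℝ) - c) (p.2 : ℝ) - c := by linarith
  _ ≤ f (p.1, p.2) := this
  _ = f p := by rfl

lemma key {X : Type*} [MetricSpace X] [ProperSpace X]
    (δ : ℝ) (hδ : 0 ≤ δ) (hgeo : IsGeodesicSpace X) (hhyp : Hyp4 X δ)
    (x : X) (C : Set (Boundary x)) (z : Boundary x) (hz : z ∈ C)
    (ξ : ℝ → X) (hξ : IsGeodRay ξ) (hξ0 : ξ 0 = x)
    (hξz : SeqLimit x (fun n : ℕ => ξ n) z)
    (q r : ℕ → X) (K : ℝ) (hK : 0 ≤ K) (w : Boundary x) (hw : w ∈ C)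
    (hq1 : ∀ n : ℕ, dist x (q n) = n)
    (hq2 : ∀ n m : ℕ, dist (q n) (q m) = |(n : ℝ) - m|)
    (hqr : ∀ n, dist (q n) (r n) ≤ K)
    (hr : SeqLimit x r w)
    (hfreq : ∀ i : ℕ, ∃ k, i ≤ k ∧ gp x (ξ k) (q k) ≤ δ) :
    ∃ γ : ℝ → X, IsGeodLine γ ∧ (∃ v ∈ C, LineEndPlus x γ v) ∧
      (∃ v ∈ C, LineEndMinus x γ v) ∧ ∀ t : ℝ, 0 ≤ t → dist (ξ t) (γ t) ≤ 14 * δ := by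
  classical
  choose k hk1 hk2 using hfreq
  have hxξ : ∀ s : ℝ, 0 ≤ s → dist x (ξ s) = s := by
    intro s hs
    rw [← hξ0, hξ 0 s le_rfl hs, zero_sub, abs_neg, abs_of_nonneg hs]
  have hseg : ∀ j : ℕ, ∃ (σ : ℝ → X) (a b : ℝ), a ≤ 0 ∧ 0 ≤ b ∧ σ a = q (k j) ∧
      σ b = ξ (k j) ∧
      (∀ s ∈ Set.Icc a b, ∀ t ∈ Set.Icc a b, dist (σ s) (σ t) = |s - t|) ∧
      (∀ t, σ t = σ (max a (min t b))) ∧ dist x (σ 0) ≤ 3 * δ :=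
    fun j => exists_centered_segment δ hδ hgeo hhyp x (ξ (k j)) (q (k j)) (hk2 j)
  choose σ a b ha hb haq hbp hiso hclamp hd0 using hseg
  -- basic bounds
  have hdist0 : ∀ (j : ℕ) (t : ℝ), dist x (σ j t) ≤ 3 * δ + |t| := by
    intro j t
    rw [hclamp j t]
    set u := max (a j) (min t (b j)) with hu
    have hu1 : a j ≤ u := le_max_left _ _
    have hu2 : u ≤ b j := max_le (le_trans (ha j) (hb j)) (min_le_right _ _)
    have hu3 : |u| ≤ |t| := by
      rw [abs_le]
      constructor
      · have : min t (b j) ≥ -|t| := le_min (neg_abs_le t) (le_trans (neg_nonpos.2 (abs_nonneg t)) (hb j))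
        linarith [le_max_right (a j) (min t (b j))]
      · exact max_le (le_trans (ha j) (abs_nonneg t)) (le_trans (min_le_left _ _) (le_abs_self t))
    have h0mem : (0:ℝ) ∈ Set.Icc (a j) (b j) := ⟨ha j, hb j⟩
    have humem : u ∈ Set.Icc (a j) (b j) := ⟨hu1, hu2⟩
    calc dist x (σ j u) ≤ dist x (σ j 0) + dist (σ j 0) (σ j u) := dist_triangle _ _ _
    _ ≤ 3 * δ + |u| := by
        rw [hiso j 0 h0mem u humem, zero_sub, abs_neg]
        exact add_le_add (hd0 j) le_rfl
    _ ≤ 3 * δ + |t| := by linarith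
  have hb_eq : ∀ j, dist (σ j 0) (ξ (k j)) = b j := by
    intro j
    rw [← hbp j, hiso j 0 ⟨ha j, hb j⟩ (b j) ⟨le_trans (ha j) (hb j), le_rfl⟩,
      zero_sub, abs_neg, abs_of_nonneg (hb j)]
  have ha_eq : ∀ j, dist (σ j 0) (q (k j)) = -(a j) := by
    intro j
    rw [← haq j, hiso j 0 ⟨ha j, hb j⟩ (a j) ⟨le_rfl, le_trans (ha j) (hb j)⟩,
      zero_sub, abs_neg, abs_of_nonpos (ha j)]
  have hb_lb : ∀ j, (k j : ℝ) - 3 * δ ≤ b j := by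
    intro j
    have := dist_triangle x (σ j 0) (ξ (k j))
    rw [hb_eq j] at this
    have h2 := hxξ (k j) (Nat.cast_nonneg _)
    linarith [hd0 j]
  have hb_ub : ∀ j, b j ≤ (k j : ℝ) + 3 * δ := by
    intro j
    have := dist_triangle (σ j 0) x (ξ (k j))
    rw [dist_comm (σ j 0) x] at this
    have h2 := hxξ (k j) (Nat.cast_nonneg _)
    linarith [hb_eq j, hd0 j]
  have ha_lb : ∀ j, (k j : ℝ) - 3 * δ ≤ -(a j) := by
    intro j
    have := dist_triangle x (σ j 0) (q (k j))
    rw [ha_eq j] at this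
    linarith [hd0 j, hq1 (k j)]
  have ha_ub : ∀ j, -(a j) ≤ (k j : ℝ) + 3 * δ := by
    intro j
    have := dist_triangle (σ j 0) x (q (k j))
    rw [dist_comm (σ j 0) x] at this
    linarith [ha_eq j, hd0 j, hq1 (k j)]
  have hkj : ∀ j : ℕ, (j : ℝ) ≤ (k j : ℝ) := fun j => Nat.cast_le.2 (hk1 j)
  -- ultrafilter limit
  let U : Ultrafilter ℕ := Ultrafilter.of Filter.atTop
  have hU : (U : Filter ℕ) ≤ Filter.atTop := Ultrafilter.of_le _
  have hex : ∀ t : ℝ, ∃ y, Filter.Tendsto (fun j => σ j t) (U : Filter ℕ) (nhds y) := by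
    intro t
    obtain ⟨y, _, hy⟩ := (isCompact_closedBall x (3 * δ + |t|)).ultrafilter_le_nhds
      (U.map (fun j => σ j t)) (by
        rw [Filter.le_principal_iff]
        exact Filter.mem_map.2 ((U : Filter ℕ).sets_of_superset Filter.univ_mem
          (fun j _ => Metric.mem_closedBall.2 (by rw [dist_comm]; exact hdist0 j t))))
    exact ⟨y, hy⟩
  choose γ hγ using hex
  -- eventually t in the interval
  have hmem_ev : ∀ t : ℝ, ∀ᶠ j in Filter.atTop, t ∈ Set.Icc (a j) (b j) ∧ |t| ≤ (k j : ℝ) := by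
    intro t
    obtain ⟨N, hN⟩ := exists_nat_ge (|t| + 3 * δ)
    filter_upwards [Filter.eventually_ge_atTop N] with j hj
    have hjN : (N : ℝ) ≤ (j : ℝ) := Nat.cast_le.2 hj
    have h1 : |t| + 3 * δ ≤ (k j : ℝ) := le_trans hN (le_trans hjN (hkj j))
    have h2 : -|t| ≤ t := neg_abs_le t
    have h3 : t ≤ |t| := le_abs_self t
    refine ⟨⟨?_, ?_⟩, by linarith⟩
    · have := ha_lb j; linarith
    · have := hb_lb j; linarith
  have hgeod : IsGeodLine γ := by
    intro s t
    have hev : ∀ᶠ j in Filter.atTop, dist (σ j s) (σ j t) = |s - t| := by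
      filter_upwards [hmem_ev s, hmem_ev t] with j hjs hjt
      exact hiso j s hjs.1 t hjt.1
    have h1 : Filter.Tendsto (fun j => dist (σ j s) (σ j t)) (U : Filter ℕ)
        (nhds (dist (γ s) (γ t))) := (hγ s).dist (hγ t)
    have h2 : Filter.Tendsto (fun j => dist (σ j s) (σ j t)) (U : Filter ℕ)
        (nhds |s - t|) :=
      tendsto_const_nhds.congr' ((hev.filter_mono hU).mono fun j hj => hj.symm)
    exact tendsto_nhds_unique h1 h2
  have hclose : ∀ t : ℝ, 0 ≤ t → dist (ξ t) (γ t) ≤ 11 * δ := by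
    intro t ht
    have hev : ∀ᶠ j in Filter.atTop, dist (ξ t) (σ j t) ≤ 11 * δ := by
      filter_upwards [hmem_ev t] with j hj
      obtain ⟨htmem, htk⟩ := hj
      rw [abs_of_nonneg ht] at htk
      have h1 : dist x (σ j t) ≤ t + 3 * δ := by
        have := hdist0 j t; rw [abs_of_nonneg ht] at this; linarith
      have h2 : t - 3 * δ ≤ dist x (σ j t) := by
        have e : dist (σ j 0) (σ j t) = t := by
          rw [hiso j 0 ⟨ha j, hb j⟩ t htmem, zero_sub, abs_neg, abs_of_nonneg ht]
        have := dist_triangle (σ j 0) x (σ j t)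
        rw [dist_comm (σ j 0) x] at this
        linarith [hd0 j, e]
      have h3 : dist (ξ (k j : ℕ)) (σ j t) = b j - t := by
        rw [← hbp j, hiso j (b j) ⟨le_trans (ha j) (hb j), le_rfl⟩ t htmem,
          abs_of_nonneg (by linarith [htmem.2] : (0:ℝ) ≤ b j - t)]
      have h4 : gp x (ξ (k j : ℕ)) (σ j t) ≥ t - 3 * δ := by
        have e : gp x (ξ (k j : ℕ)) (σ j t)
            = (dist x (ξ (k j : ℕ)) + dist x (σ j t) - dist (ξ (k j : ℕ)) (σ j t)) / 2 := rfl
        rw [e, hxξ (k j) (Nat.cast_nonneg _), h3]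
        have := hb_ub j
        linarith
      have h5 : gp x (ξ t) (ξ (k j : ℕ)) = t := by
        have e : gp x (ξ t) (ξ (k j : ℕ))
            = (dist x (ξ t) + dist x (ξ (k j : ℕ)) - dist (ξ t) (ξ (k j : ℕ))) / 2 := rfl
        rw [e, hxξ t ht, hxξ (k j) (Nat.cast_nonneg _), hξ t (k j) ht (Nat.cast_nonneg _),
          abs_of_nonpos (by linarith : t - (k j : ℝ) ≤ 0)]
        ring
      have h6 := hhyp x (ξ t) (ξ (k j : ℕ)) (σ j t)
      have h7 : gp x (ξ t) (σ j t) ≥ t - 4 * δ := by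
        rw [h5] at h6
        rcases min_le_iff.mp (le_refl (min t (gp x (ξ (k j : ℕ)) (σ j t)))) with hc | hc
        all_goals
        · have hm : min t (gp x (ξ (k j : ℕ)) (σ j t)) ≥ t - 3 * δ :=
            le_min (by linarith) h4
          linarith
      have h8 := dist_eq_gp x (ξ t) (σ j t)
      rw [hxξ t ht] at h8
      linarith
    have hT : Filter.Tendsto (fun j => dist (ξ t) (σ j t)) (U : Filter ℕ)
        (nhds (dist (ξ t) (γ t))) := tendsto_const_nhds.dist (hγ t)
    exact le_of_tendsto hT (hev.filter_mono hU)
  have hxdl : ∀ t : ℝ, |t| - 3 * δ ≤ dist x (γ t) := by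
    intro t
    have hev : ∀ᶠ j in Filter.atTop, |t| - 3 * δ ≤ dist x (σ j t) := by
      filter_upwards [hmem_ev t] with j hj
      have e : dist (σ j 0) (σ j t) = |t| := by
        rw [hiso j 0 ⟨ha j, hb j⟩ t hj.1, zero_sub, abs_neg]
      have := dist_triangle (σ j 0) x (σ j t)
      rw [dist_comm (σ j 0) x] at this
      linarith [hd0 j]
    exact ge_of_tendsto (tendsto_const_nhds.dist (hγ t)) (hev.filter_mono hU)
  -- negative-end Gromov product bound
  have hqlim : ∀ n m : ℕ, gp x (γ (-(n : ℝ))) (q m) ≥ min ((n : ℝ) - 3 * δ) m - δ := by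
    intro n m
    have hev : ∀ᶠ j in Filter.atTop,
        gp x (σ j (-(n : ℝ))) (q m) ≥ min ((n : ℝ) - 3 * δ) m - δ := by
      filter_upwards [hmem_ev (-(n : ℝ))] with j hj
      obtain ⟨hnmem, hnk⟩ := hj
      rw [abs_neg, abs_of_nonneg (Nat.cast_nonneg n)] at hnk
      -- step A : gp x (σ j (-n)) (q (k j)) ≥ n - 3δ
      have hqd : dist (σ j (-(n : ℝ))) (q (k j)) = -(n : ℝ) - a j := by
        rw [← haq j, hiso j (-(n : ℝ)) hnmem (a j) ⟨le_rfl, le_trans (ha j) (hb j)⟩,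
          abs_of_nonneg (by linarith [hnmem.1] : (0:ℝ) ≤ -(n : ℝ) - a j)]
      have hxd : (n : ℝ) - 3 * δ ≤ dist x (σ j (-(n : ℝ))) := by
        have e : dist (σ j 0) (σ j (-(n : ℝ))) = (n : ℝ) := by
          rw [hiso j 0 ⟨ha j, hb j⟩ (-(n : ℝ)) hnmem, zero_sub, neg_neg,
            abs_of_nonneg (Nat.cast_nonneg n)]
        have := dist_triangle (σ j 0) x (σ j (-(n : ℝ)))
        rw [dist_comm (σ j 0) x] at this
        linarith [hd0 j]
      have hstepA : gp x (σ j (-(n : ℝ))) (q (k j)) ≥ (n : ℝ) - 3 * δ := by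
        have e : gp x (σ j (-(n : ℝ))) (q (k j)) = (dist x (σ j (-(n : ℝ)))
            + dist x (q (k j)) - dist (σ j (-(n : ℝ))) (q (k j))) / 2 := rfl
        rw [e, hqd, hq1 (k j)]
        have := ha_ub j
        linarith
      -- gp x (q (k j)) (q m) ≥ min (k j) m
      have hqq : gp x (q (k j)) (q m) ≥ min ((k j : ℝ)) m := by
        have e : gp x (q (k j)) (q m)
            = (dist x (q (k j)) + dist x (q m) - dist (q (k j)) (q m)) / 2 := rfl
        rw [e, hq1 (k j), hq1 m, hq2 (k j) m]
        rcases le_total ((k j : ℝ)) (m : ℝ) with hc | hc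
        · rw [min_eq_left hc, abs_of_nonpos (by linarith : (k j : ℝ) - m ≤ 0)]; linarith
        · rw [min_eq_right hc, abs_of_nonneg (by linarith : (0:ℝ) ≤ (k j : ℝ) - m)]; linarith
      have h6 := hhyp x (σ j (-(n : ℝ))) (q (k j)) (q m)
      have hmm : min ((n : ℝ) - 3 * δ) (m : ℝ) ≤ min ((n : ℝ) - 3 * δ) (min ((k j : ℝ)) m) := by
        refine le_min (min_le_left _ _) (le_min ?_ (min_le_right _ _))
        calc min ((n:ℝ) - 3*δ) (m:ℝ) ≤ (n:ℝ) - 3*δ := min_le_left _ _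
          _ ≤ (k j : ℝ) := by linarith
      calc min ((n : ℝ) - 3 * δ) (m : ℝ) - δ
          ≤ min ((n : ℝ) - 3 * δ) (min ((k j : ℝ)) m) - δ := by linarith
        _ ≤ min (gp x (σ j (-(n : ℝ))) (q (k j))) (gp x (q (k j)) (q m)) - δ := by
            have := le_min (le_trans (min_le_left _ _) hstepA)
              (le_trans (min_le_right _ _) hqq)
            linarith [this]
        _ ≤ gp x (σ j (-(n : ℝ))) (q m) := h6
    exact ge_of_tendsto (tendsto_gp_fst (hγ (-(n : ℝ))) x (q m)) (hev.filter_mono hU)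
  obtain ⟨hu, hmk⟩ := hξz
  obtain ⟨hru, hrmk⟩ := hr
  have hξn : ∀ n m : ℕ, gp x (ξ (n : ℝ)) (ξ (m : ℝ)) = min (n : ℝ) m := by
    intro n m
    have e : gp x (ξ (n : ℝ)) (ξ (m : ℝ))
        = (dist x (ξ (n : ℝ)) + dist x (ξ (m : ℝ)) - dist (ξ (n : ℝ)) (ξ (m : ℝ))) / 2 := rfl
    rw [e, hxξ n (Nat.cast_nonneg _), hxξ m (Nat.cast_nonneg _),
      hξ n m (Nat.cast_nonneg _) (Nat.cast_nonneg _), half_min]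
  have hplus_bound : ∀ n m : ℕ,
      gp x (γ (n : ℝ)) (ξ (m : ℝ)) ≥ min ((n : ℝ) - 11 * δ) m - 11 * δ := by
    intro n m
    have h1 := gp_lip_left x (γ (n : ℝ)) (ξ (n : ℝ)) (ξ (m : ℝ))
    have h2 : dist (γ (n : ℝ)) (ξ (n : ℝ)) ≤ 11 * δ := by
      rw [dist_comm]; exact hclose n (Nat.cast_nonneg _)
    rw [hξn n m] at h1
    have h3 : min ((n : ℝ) - 11 * δ) (m : ℝ) ≤ min (n : ℝ) m :=
      min_le_min (by linarith) le_rfl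
    linarith
  have hplus_grom : IsGromovSeq x (fun n : ℕ => γ (n : ℝ)) := by
    apply tendsto_min_aux (22 * δ)
    intro n m
    have h1 := gp_lip x (γ (n : ℝ)) (γ (m : ℝ)) (ξ (m : ℝ))
    have h2 : dist (γ (m : ℝ)) (ξ (m : ℝ)) ≤ 11 * δ := by
      rw [dist_comm]; exact hclose m (Nat.cast_nonneg _)
    have h3 := hplus_bound n m
    have h4 : min ((n : ℝ) - 22 * δ) (m : ℝ) ≤ min ((n : ℝ) - 11 * δ) m :=
      min_le_min (by linarith) le_rfl
    linarith
  have hminus_grom : IsGromovSeq x (fun n : ℕ => γ (-(n : ℝ))) := by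
    apply tendsto_min_aux (3 * δ)
    intro n m
    have e : gp x (γ (-(n : ℝ))) (γ (-(m : ℝ))) = (dist x (γ (-(n : ℝ)))
        + dist x (γ (-(m : ℝ))) - dist (γ (-(n : ℝ))) (γ (-(m : ℝ)))) / 2 := rfl
    have h1 := hxdl (-(n : ℝ))
    have h2 := hxdl (-(m : ℝ))
    rw [abs_neg, abs_of_nonneg (Nat.cast_nonneg _)] at h1 h2
    have h3 : |(-(n : ℝ)) - (-(m : ℝ))| = |(n : ℝ) - m| := by
      rw [abs_sub_comm]; congr 1; ring
    have h4 := half_min (n : ℝ) (m : ℝ)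
    have h5 : min ((n : ℝ) - 3 * δ) (m : ℝ) ≤ min (n : ℝ) m :=
      min_le_min (by linarith) le_rfl
    rw [e, hgeod (-(n : ℝ)) (-(m : ℝ)), h3]
    linarith
  have hminus_bound : ∀ n m : ℕ,
      gp x (γ (-(n : ℝ))) (r m) ≥ min ((n : ℝ) - (4 * δ + K)) m - (4 * δ + K) := by
    intro n m
    have h1 := hqlim n m
    have h2 := gp_lip x (γ (-(n : ℝ))) (r m) (q m)
    have h3 : dist (r m) (q m) ≤ K := by rw [dist_comm]; exact hqr m
    have h4 : min ((n : ℝ) - (4 * δ + K)) (m : ℝ) ≤ min ((n : ℝ) - 3 * δ) m :=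
      min_le_min (by linarith) le_rfl
    linarith
  refine ⟨γ, hgeod, ⟨z, hz, hplus_grom, ?_⟩, ⟨w, hw, hminus_grom, ?_⟩,
    fun t ht => by linarith [hclose t ht]⟩
  · rw [← hmk]
    exact Quot.sound (tendsto_min_aux (11 * δ) (fun n m => hplus_bound n m))
  · rw [← hrmk]
    exact Quot.sound (tendsto_min_aux (4 * δ + K) (fun n m => hminus_bound n m))

/-- Let `X` be a proper geodesic `δ`-hyperbolic space, `C ⊆ ∂X` a subset with at least
two points and `x ∈ QC-Hull(C)`. Then for every `z ∈ C` and every geodesic ray `ξ` from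
`x` to `z` there is a geodesic line `γ` with both endpoints in `C` such that
`d(ξ(t), γ(t)) ≤ 14δ` for every `t ≥ 0`; in particular
`d(ξ(t), QC-Hull(C)) ≤ 14δ` for all `t ≥ 0`. -/
theorem ray_close_to_line_with_endpoints_in_C {X : Type*} [MetricSpace X] [ProperSpace X]
    (δ : ℝ) (hδ : 0 ≤ δ) (hgeo : IsGeodesicSpace X) (hhyp : Hyp4 X δ)
    (x : X) (C : Set (Boundary x)) (hC : C.Nontrivial)
    (hx : x ∈ QCHull x C) (z : Boundary x) (hz : z ∈ C)
    (ξ : ℝ → X) (hξ : IsGeodRay ξ) (hξ0 : ξ 0 = x)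
    (hξz : SeqLimit x (fun n : ℕ => ξ n) z) :
    (∃ γ : ℝ → X, IsGeodLine γ ∧ (∃ w ∈ C, LineEndPlus x γ w) ∧
      (∃ w ∈ C, LineEndMinus x γ w) ∧
      ∀ t : ℝ, 0 ≤ t → dist (ξ t) (γ t) ≤ 14 * δ) ∧
    ∀ t : ℝ, 0 ≤ t → Metric.infDist (ξ t) (QCHull x C) ≤ 14 * δ := by
  obtain ⟨γ₀, hline0, ⟨zp, hzp, hzpend⟩, ⟨zm, hzm, hzmend⟩, t₀, ht₀⟩ := hx
  have hdx : ∀ s : ℝ, dist x (γ₀ s) = |t₀ - s| := by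
    intro s; rw [← ht₀]; exact hline0 t₀ s
  -- the min inequality
  have hmin : ∀ k : ℕ, gp x (ξ (k : ℝ)) (γ₀ (t₀ + k)) ≤ δ ∨
      gp x (ξ (k : ℝ)) (γ₀ (t₀ - k)) ≤ δ := by
    intro k
    have h := hhyp x (γ₀ (t₀ + k)) (ξ (k : ℝ)) (γ₀ (t₀ - k))
    have h0 : gp x (γ₀ (t₀ + k)) (γ₀ (t₀ - k)) = 0 := by
      have e : gp x (γ₀ (t₀ + k)) (γ₀ (t₀ - k)) = (dist x (γ₀ (t₀ + k))
          + dist x (γ₀ (t₀ - k)) - dist (γ₀ (t₀ + k)) (γ₀ (t₀ - k))) / 2 := rfl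
      rw [e, hdx (t₀ + k), hdx (t₀ - k), hline0 (t₀ + k) (t₀ - k)]
      have e1 : |t₀ - (t₀ + (k:ℝ))| = k := by
        rw [show t₀ - (t₀ + (k:ℝ)) = -(k:ℝ) by ring, abs_neg,
          abs_of_nonneg (Nat.cast_nonneg k)]
      have e2 : |t₀ - (t₀ - (k:ℝ))| = k := by
        rw [show t₀ - (t₀ - (k:ℝ)) = (k:ℝ) by ring, abs_of_nonneg (Nat.cast_nonneg k)]
      have e3 : |t₀ + (k:ℝ) - (t₀ - k)| = 2 * k := by
        rw [show t₀ + (k:ℝ) - (t₀ - k) = 2 * (k:ℝ) by ring,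
          abs_of_nonneg (by positivity : (0:ℝ) ≤ 2 * (k:ℝ))]
      rw [e1, e2, e3]; ring
    rw [h0] at h
    have h2 : min (gp x (γ₀ (t₀ + k)) (ξ (k : ℝ))) (gp x (ξ (k : ℝ)) (γ₀ (t₀ - k))) ≤ δ := by
      linarith
    rcases min_le_iff.mp h2 with hc | hc
    · left; rw [gp_comm]; exact hc
    · right; exact hc
  have hfreq2 : (∃ᶠ k : ℕ in Filter.atTop, gp x (ξ (k : ℝ)) (γ₀ (t₀ + k)) ≤ δ) ∨
      ∃ᶠ k : ℕ in Filter.atTop, gp x (ξ (k : ℝ)) (γ₀ (t₀ - k)) ≤ δ :=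
    Filter.frequently_or_distrib.mp ((Filter.Eventually.of_forall hmin).frequently)
  have hmain : ∃ γ : ℝ → X, IsGeodLine γ ∧ (∃ v ∈ C, LineEndPlus x γ v) ∧
      (∃ v ∈ C, LineEndMinus x γ v) ∧ ∀ t : ℝ, 0 ≤ t → dist (ξ t) (γ t) ≤ 14 * δ := by
    rcases hfreq2 with hf | hf
    · -- use the positive end zp : q n = γ₀ (t₀ + n), r n = γ₀ n
      refine key δ hδ hgeo hhyp x C z hz ξ hξ hξ0 hξz
        (fun n : ℕ => γ₀ (t₀ + n)) (fun n : ℕ => γ₀ (n : ℝ)) |t₀| (abs_nonneg t₀)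
        zp hzp ?_ ?_ ?_ hzpend ?_
      · intro n; rw [hdx (t₀ + n), show t₀ - (t₀ + (n:ℝ)) = -(n:ℝ) by ring, abs_neg,
          abs_of_nonneg (Nat.cast_nonneg n)]
      · intro n m
        rw [hline0 (t₀ + n) (t₀ + m)]; congr 1; ring
      · intro n
        rw [hline0 (t₀ + n) (n : ℝ), show t₀ + (n:ℝ) - n = t₀ by ring]
      · intro i
        obtain ⟨k, hk1, hk2⟩ := Filter.frequently_atTop.mp hf i
        exact ⟨k, hk1, hk2⟩
    · -- use the negative end zm : q n = γ₀ (t₀ - n), r n = γ₀ (-n)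
      refine key δ hδ hgeo hhyp x C z hz ξ hξ hξ0 hξz
        (fun n : ℕ => γ₀ (t₀ - n)) (fun n : ℕ => γ₀ (-(n : ℝ))) |t₀| (abs_nonneg t₀)
        zm hzm ?_ ?_ ?_ hzmend ?_
      · intro n; rw [hdx (t₀ - n), show t₀ - (t₀ - (n:ℝ)) = (n:ℝ) by ring,
          abs_of_nonneg (Nat.cast_nonneg n)]
      · intro n m
        rw [hline0 (t₀ - n) (t₀ - m), show t₀ - (n:ℝ) - (t₀ - m) = -((n:ℝ) - m) by ring,
          abs_neg]
      · intro n
        rw [hline0 (t₀ - n) (-(n : ℝ)), show t₀ - (n:ℝ) - -(n:ℝ) = t₀ by ring]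
      · intro i
        obtain ⟨k, hk1, hk2⟩ := Filter.frequently_atTop.mp hf i
        exact ⟨k, hk1, hk2⟩
  refine ⟨hmain, ?_⟩
  obtain ⟨γ, hline, hplus, hminus, hcl⟩ := hmain
  intro t ht
  have hmem : γ t ∈ QCHull x C := ⟨γ, hline, hplus, hminus, t, rfl⟩
  exact le_trans (Metric.infDist_le_dist_of_mem hmem) (hcl t ht)
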